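/- Define H₁, H₂, H₃ : ℝ⁶ → ℝ on coordinates (q₁, q₂, q₃, p₁, p₂, p₃) by H₁ = 2p₁p₃ + p₂² + 2q₁p₂p₃ + q₂p₃² - q₁⁴ + 3q₁²q₂ - 2q₁q₃ - q₂², H₂ = 2q₁p₁p₃ + 2q₁p₂² + 2p₁p₂ + (q₁q₂ - q₃)p₃² + 2q₁²p₂p₃ - q₁³q₂ + q₁²q₃ + 2q₁q₂² - 2q₂q₃, and H₃ = p₁² + 2q₁p₁p₂ + 2q₂p₁p₃ + q₁²p₂² + (q₂² - q₁q₃)p₃² + 2(q₁q₂ - q₃)p₂p₃ - q₁³q₃ + 2q₁q₂q₃ - q₃². Then the canonical Poisson brackets {H₁,H₂}, {H₁,H₃}, {H₂,H₃} vanish identically on ℝ⁶, where {F,G} = ∑_{i=1}^{3} (∂F/∂q_i ∂G/∂p_i - ∂F/∂p_i ∂G/∂q_i). -/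

import Mathlib

/-- The Stäckel Hamiltonian `H₁` for n = 3 in Viète coordinates. -/
def H₁n3 (q₁ q₂ q₃ p₁ p₂ p₃ : ℝ) : ℝ :=
  2 * p₁ * p₃ + p₂ ^ 2 + 2 * q₁ * p₂ * p₃ + q₂ * p₃ ^ 2
    - q₁ ^ 4 + 3 * q₁ ^ 2 * q₂ - 2 * q₁ * q₃ - q₂ ^ 2

/-- The Stäckel Hamiltonian `H₂` for n = 3 in Viète coordinates. -/
def H₂n3 (q₁ q₂ q₃ p₁ p₂ p₃ : ℝ) : ℝ :=
  2 * q₁ * p₁ * p₃ + 2 * q₁ * p₂ ^ 2 + 2 * p₁ * p₂ + (q₁ * q₂ - q₃) * p₃ ^ 2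
    + 2 * q₁ ^ 2 * p₂ * p₃ - q₁ ^ 3 * q₂ + q₁ ^ 2 * q₃ + 2 * q₁ * q₂ ^ 2 - 2 * q₂ * q₃

/-- The Stäckel Hamiltonian `H₃` for n = 3 in Viète coordinates. -/
def H₃n3 (q₁ q₂ q₃ p₁ p₂ p₃ : ℝ) : ℝ :=
  p₁ ^ 2 + 2 * q₁ * p₁ * p₂ + 2 * q₂ * p₁ * p₃ + q₁ ^ 2 * p₂ ^ 2
    + (q₂ ^ 2 - q₁ * q₃) * p₃ ^ 2 + 2 * (q₁ * q₂ - q₃) * p₂ * p₃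
    - q₁ ^ 3 * q₃ + 2 * q₁ * q₂ * q₃ - q₃ ^ 2

/-- The canonical Poisson bracket on `ℝ⁶`, `{F,G} = ∑ᵢ (∂F/∂qᵢ ∂G/∂pᵢ - ∂F/∂pᵢ ∂G/∂qᵢ)`. -/
noncomputable def pb3 (F G : ℝ → ℝ → ℝ → ℝ → ℝ → ℝ → ℝ) (q₁ q₂ q₃ p₁ p₂ p₃ : ℝ) : ℝ :=
  deriv (fun x => F x q₂ q₃ p₁ p₂ p₃) q₁ * deriv (fun x => G q₁ q₂ q₃ x p₂ p₃) p₁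
    - deriv (fun x => F q₁ q₂ q₃ x p₂ p₃) p₁ * deriv (fun x => G x q₂ q₃ p₁ p₂ p₃) q₁
    + deriv (fun x => F q₁ x q₃ p₁ p₂ p₃) q₂ * deriv (fun x => G q₁ q₂ q₃ p₁ x p₃) p₂
    - deriv (fun x => F q₁ q₂ q₃ p₁ x p₃) p₂ * deriv (fun x => G q₁ x q₃ p₁ p₂ p₃) q₂
    + deriv (fun x => F q₁ q₂ x p₁ p₂ p₃) q₃ * deriv (fun x => G q₁ q₂ q₃ p₁ p₂ x) p₃
    - deriv (fun x => F q₁ q₂ q₃ p₁ p₂ x) p₃ * deriv (fun x => G q₁ q₂ x p₁ p₂ p₃) q₃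

section Gradients

variable (q₁ q₂ q₃ p₁ p₂ p₃ : ℝ)

lemma deriv_H₁n3_q₁ : deriv (fun x => H₁n3 x q₂ q₃ p₁ p₂ p₃) q₁
    = 2 * p₂ * p₃ - 4 * q₁ ^ 3 + 6 * q₁ * q₂ - 2 * q₃ := by
  conv_lhs => simp (disch := fun_prop) [H₁n3]
  ring

lemma deriv_H₁n3_q₂ : deriv (fun x => H₁n3 q₁ x q₃ p₁ p₂ p₃) q₂ = p₃ ^ 2 + 3 * q₁ ^ 2 - 2 * q₂ := by
  conv_lhs => simp (disch := fun_prop) [H₁n3]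

lemma deriv_H₁n3_q₃ : deriv (fun x => H₁n3 q₁ q₂ x p₁ p₂ p₃) q₃ = -2 * q₁ := by
  conv_lhs => simp (disch := fun_prop) [H₁n3]
  ring

lemma deriv_H₁n3_p₁ : deriv (fun x => H₁n3 q₁ q₂ q₃ x p₂ p₃) p₁ = 2 * p₃ := by
  conv_lhs => simp (disch := fun_prop) [H₁n3]

lemma deriv_H₁n3_p₂ : deriv (fun x => H₁n3 q₁ q₂ q₃ p₁ x p₃) p₂ = 2 * p₂ + 2 * q₁ * p₃ := by
  conv_lhs => simp (disch := fun_prop) [H₁n3]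

lemma deriv_H₁n3_p₃ : deriv (fun x => H₁n3 q₁ q₂ q₃ p₁ p₂ x) p₃
    = 2 * p₁ + 2 * q₁ * p₂ + 2 * q₂ * p₃ := by
  conv_lhs => simp (disch := fun_prop) [H₁n3]
  ring

lemma deriv_H₂n3_q₁ : deriv (fun x => H₂n3 x q₂ q₃ p₁ p₂ p₃) q₁
    = 2 * p₁ * p₃ + 2 * p₂ ^ 2 + q₂ * p₃ ^ 2 + 4 * q₁ * p₂ * p₃
      - 3 * q₁ ^ 2 * q₂ + 2 * q₁ * q₃ + 2 * q₂ ^ 2 := by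
  conv_lhs => simp (disch := fun_prop) [H₂n3]
  ring

lemma deriv_H₂n3_q₂ : deriv (fun x => H₂n3 q₁ x q₃ p₁ p₂ p₃) q₂
    = q₁ * p₃ ^ 2 - q₁ ^ 3 + 4 * q₁ * q₂ - 2 * q₃ := by
  conv_lhs => simp (disch := fun_prop) [H₂n3]
  ring

lemma deriv_H₂n3_q₃ : deriv (fun x => H₂n3 q₁ q₂ x p₁ p₂ p₃) q₃ = -p₃ ^ 2 + q₁ ^ 2 - 2 * q₂ := by
  conv_lhs => simp (disch := fun_prop) [H₂n3]

lemma deriv_H₂n3_p₁ : deriv (fun x => H₂n3 q₁ q₂ q₃ x p₂ p₃) p₁ = 2 * p₂ + 2 * q₁ * p₃ := by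
  conv_lhs => simp (disch := fun_prop) [H₂n3]
  ring

lemma deriv_H₂n3_p₂ : deriv (fun x => H₂n3 q₁ q₂ q₃ p₁ x p₃) p₂
    = 2 * p₁ + 4 * q₁ * p₂ + 2 * q₁ ^ 2 * p₃ := by
  conv_lhs => simp (disch := fun_prop) [H₂n3]
  ring

lemma deriv_H₂n3_p₃ : deriv (fun x => H₂n3 q₁ q₂ q₃ p₁ p₂ x) p₃
    = 2 * q₁ * p₁ + 2 * q₁ ^ 2 * p₂ + 2 * (q₁ * q₂ - q₃) * p₃ := by
  conv_lhs => simp (disch := fun_prop) [H₂n3]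
  ring

lemma deriv_H₃n3_q₁ : deriv (fun x => H₃n3 x q₂ q₃ p₁ p₂ p₃) q₁
    = 2 * p₁ * p₂ + 2 * q₁ * p₂ ^ 2 + 2 * q₂ * p₂ * p₃ - q₃ * p₃ ^ 2
      - 3 * q₁ ^ 2 * q₃ + 2 * q₂ * q₃ := by
  conv_lhs => simp (disch := fun_prop) [H₃n3]
  ring

lemma deriv_H₃n3_q₂ : deriv (fun x => H₃n3 q₁ x q₃ p₁ p₂ p₃) q₂
    = 2 * p₁ * p₃ + 2 * q₁ * p₂ * p₃ + 2 * q₂ * p₃ ^ 2 + 2 * q₁ * q₃ := by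
  conv_lhs => simp (disch := fun_prop) [H₃n3]
  ring

lemma deriv_H₃n3_q₃ : deriv (fun x => H₃n3 q₁ q₂ x p₁ p₂ p₃) q₃
    = -2 * p₂ * p₃ - q₁ * p₃ ^ 2 - q₁ ^ 3 + 2 * q₁ * q₂ - 2 * q₃ := by
  conv_lhs => simp (disch := fun_prop) [H₃n3]
  ring

lemma deriv_H₃n3_p₁ : deriv (fun x => H₃n3 q₁ q₂ q₃ x p₂ p₃) p₁
    = 2 * p₁ + 2 * q₁ * p₂ + 2 * q₂ * p₃ := by
  conv_lhs => simp (disch := fun_prop) [H₃n3]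

lemma deriv_H₃n3_p₂ : deriv (fun x => H₃n3 q₁ q₂ q₃ p₁ x p₃) p₂
    = 2 * q₁ * p₁ + 2 * q₁ ^ 2 * p₂ + 2 * (q₁ * q₂ - q₃) * p₃ := by
  conv_lhs => simp (disch := fun_prop) [H₃n3]
  ring

lemma deriv_H₃n3_p₃ : deriv (fun x => H₃n3 q₁ q₂ q₃ p₁ p₂ x) p₃
    = 2 * q₂ * p₁ + 2 * (q₁ * q₂ - q₃) * p₂ + 2 * (q₂ ^ 2 - q₁ * q₃) * p₃ := by
  conv_lhs => simp (disch := fun_prop) [H₃n3]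
  ring

end Gradients

/-- The three Stäckel Hamiltonians for n = 3 are pairwise in involution with
respect to the canonical Poisson bracket on `ℝ⁶`. -/
theorem poisson_bracket_n3 (q₁ q₂ q₃ p₁ p₂ p₃ : ℝ) :
    pb3 H₁n3 H₂n3 q₁ q₂ q₃ p₁ p₂ p₃ = 0
      ∧ pb3 H₁n3 H₃n3 q₁ q₂ q₃ p₁ p₂ p₃ = 0
      ∧ pb3 H₂n3 H₃n3 q₁ q₂ q₃ p₁ p₂ p₃ = 0 := by
  refine ⟨?_, ?_, ?_⟩ <;>
    simp only [pb3, deriv_H₁n3_q₁, deriv_H₁n3_q₂, deriv_H₁n3_q₃, deriv_H₁n3_p₁, deriv_H₁n3_p₂,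
      deriv_H₁n3_p₃, deriv_H₂n3_q₁, deriv_H₂n3_q₂, deriv_H₂n3_q₃, deriv_H₂n3_p₁, deriv_H₂n3_p₂,
      deriv_H₂n3_p₃, deriv_H₃n3_q₁, deriv_H₃n3_q₂, deriv_H₃n3_q₃, deriv_H₃n3_p₁, deriv_H₃n3_p₂,
      deriv_H₃n3_p₃] <;>
    ring
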